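/- arXiv:2204.02749 — 5 statements merged into one kernel-verified Lean document; each statement's English description precedes it below -/
import Mathlib

section
/- (Stability of essentialness under pullback along an inclusion.) Let E, E', F, F' be categories. Suppose given: a functor f^* : E ⥤ F with a left adjoint f_! : F ⥤ E; an adjunction p^* ⊣ p_* with p^* : E ⥤ E' and p_* : E' ⥤ E; a fully faithful functor q_* : F' ⥤ F; a functor g^* : E' ⥤ F'; and a natural isomorphism f^* ∘ p_* ≅ q_* ∘ g^*. Then the composite functor p^* ∘ f_! ∘ q_* : F' ⥤ E' is left adjoint to g^*. -/
open CategoryTheory CategoryTheory.Limits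

universe v₁ v₂ v₃ v₄ u₁ u₂ u₃ u₄

/-- Stability of essentialness under pullback along an inclusion.
Suppose given a functor `f^* : E ⥤ F` with a left adjoint `f_!`, an adjunction
`p^* ⊣ p_*` with `p^* : E ⥤ E'`, a fully faithful functor `q_* : F' ⥤ F`, a functor
`g^* : E' ⥤ F'` and a natural isomorphism `f^* ∘ p_* ≅ q_* ∘ g^*` (the Beck–Chevalley
condition).  Then the composite `p^* ∘ f_! ∘ q_* : F' ⥤ E'` is left adjoint to `g^*`. -/
theorem essential_stability_along_inclusion
    {E : Type u₁} {E' : Type u₂} {F : Type u₃} {F' : Type u₄}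
    [Category.{v₁} E] [Category.{v₂} E'] [Category.{v₃} F] [Category.{v₄} F']
    (fStar : E ⥤ F) (fShriek : F ⥤ E) (adjF : fShriek ⊣ fStar)
    (pStar : E ⥤ E') (pPush : E' ⥤ E) (adjP : pStar ⊣ pPush)
    (qPush : F' ⥤ F) [qPush.Full] [qPush.Faithful]
    (gStar : E' ⥤ F')
    (bc : pPush ⋙ fStar ≅ gStar ⋙ qPush) :
    Nonempty ((qPush ⋙ fShriek ⋙ pStar) ⊣ gStar) := by
  refine ⟨Adjunction.mkOfHomEquiv
    { homEquiv := fun X Y =>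
        ((adjF.comp adjP).homEquiv (qPush.obj X) Y).trans
          ((Iso.homCongr (Iso.refl (qPush.obj X)) (bc.app Y)).trans
            (Functor.FullyFaithful.ofFullyFaithful qPush |>.homEquiv.symm))
      homEquiv_naturality_left_symm := ?_
      homEquiv_naturality_right := ?_ }⟩
  · intro X' X Y f g
    simp [Adjunction.homEquiv, Functor.FullyFaithful.homEquiv]
  · intro X Y Y' f g
    have := bc.hom.naturality g
    simp only [Equiv.trans_apply, Iso.homCongr_apply, Iso.refl_inv, Category.id_comp]
    apply qPush.map_injective
    simp only [Functor.comp_map] at this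
    simp [Adjunction.homEquiv, Functor.FullyFaithful.homEquiv, this]
end

section
/- Let E and F be finitary extensive categories with finite limits and finite coproducts, and let f_! ⊣ f^* ⊣ f_* be an adjoint triple with f^* : E ⥤ F preserving finite limits and finite coproducts (for example, the adjoint triple of an essential geometric morphism between elementary toposes). Let B be an object of E with a binary coproduct decomposition B ≅ A ⨿ A', and let a : A ⟶ B be the corresponding coprojection. Then for every object X of F and every morphism x : X ⟶ f^*(B), the comparison map θ_{X,a,x} : f_!(X ×_{f^*(B)} f^*(A)) ⟶ f_!(X) ×_B A is an isomorphism. -/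
/-!
Since `f^*` preserves the decomposition `B ≅ A ⨿ A'`, extensivity of `F` splits `X` as the
coproduct of its pullbacks along `f^*(a)` and `f^*(a')`. The left adjoint `f_!` carries this
to a decomposition of `f_!(X)` lying over `B ≅ A ⨿ A'`, and extensivity of `E` (the van Kampen
property of this coproduct) says that each summand is the pullback of the corresponding
coprojection: the square exhibiting `θ` as a comparison map is already a pullback.
-/

open CategoryTheory CategoryTheory.Limits

/-- A subobject classifier for a category `C` with a terminal object:
an object `Ω` together with a "truth" arrow `⊤_ C ⟶ Ω` such that every
monomorphism arises as the pullback of `truth` along a unique classifying map. -/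
structure Classifier (C : Type*) [Category C] [HasTerminal C] where
  Ω : C
  truth : ⊤_ C ⟶ Ω
  χ : ∀ {U A : C} (m : U ⟶ A) [Mono m], A ⟶ Ω
  isPullback : ∀ {U A : C} (m : U ⟶ A) [Mono m],
    IsPullback m (terminal.from U) (χ m) truth
  uniq : ∀ {U A : C} (m : U ⟶ A) [Mono m] (χ' : A ⟶ Ω),
    IsPullback m (terminal.from U) χ' truth → χ' = χ m

/-- `C` has a subobject classifier. -/
class HasClassifier (C : Type*) [Category C] [HasTerminal C] : Prop where
  nonempty : Nonempty (_root_.Classifier C)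

/-- Given an adjunction `fShriek ⊣ fStar` (thought of as `f_! ⊣ f^*` for an essential
geometric morphism `f`), a morphism `a : A ⟶ B` in the codomain, an object `X` of the
domain and a morphism `x : X ⟶ f^* B`, this is the comparison map
`θ : f_!(X ×_{f^* B} f^* A) ⟶ f_!(X) ×_B A`, whose first component is `f_!` of the first
pullback projection, and whose second component is `f_!` of the second pullback projection
followed by the counit `f_!(f^* A) ⟶ A`.  Here `f_!(X) ⟶ B` is the adjunct of `x`.
The geometric morphism `f` is locally connected precisely if all these maps are
isomorphisms. -/
noncomputable def thetaMap {F : Type*} {E : Type*} [Category F] [Category E]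
    [HasPullbacks E] [HasPullbacks F]
    (fShriek : F ⥤ E) (fStar : E ⥤ F) (adj : fShriek ⊣ fStar)
    {A B : E} (a : A ⟶ B) (X : F) (x : X ⟶ fStar.obj B) :
    fShriek.obj (pullback x (fStar.map a)) ⟶ pullback ((adj.homEquiv X B).symm x) a :=
  pullback.lift (fShriek.map (pullback.fst x (fStar.map a)))
    (fShriek.map (pullback.snd x (fStar.map a)) ≫ adj.counit.app A)
    (by
      have h := adj.counit.naturality a
      simp only [Functor.comp_map, Functor.id_map] at h
      rw [Adjunction.homEquiv_counit, ← Functor.map_comp_assoc, pullback.condition,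
        Functor.map_comp_assoc, Category.assoc, ← h])

namespace CategoryTheory.FinitaryExtensive

variable {C : Type*} [Category* C] [FinitaryExtensive C]

noncomputable def isColimitBinaryCofanPullbackFst {A A' B Z : C} {a : A ⟶ B} {a' : A' ⟶ B}
    (f : Z ⟶ B) [HasPullback f a] [HasPullback f a'] (hB : IsColimit (BinaryCofan.mk a a')) :
    IsColimit (BinaryCofan.mk (pullback.fst f a) (pullback.fst f a')) :=
  have ha := IsPullback.of_hasPullback f a
  have ha' := IsPullback.of_hasPullback f a'
  (((BinaryCofan.isVanKampen_iff _).mp (FinitaryExtensive.vanKampen _ hB)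
    (BinaryCofan.mk _ _) _ _ f ha.w.symm ha'.w.symm).mpr ⟨ha, ha'⟩).some

theorem isPullback_inl_of_isColimit {A A' B X X' : C} {a : A ⟶ B} {a' : A' ⟶ B}
    (hB : IsColimit (BinaryCofan.mk a a')) {c : BinaryCofan X X'} (hc : IsColimit c)
    (α : X ⟶ A) (α' : X' ⟶ A') (f : c.pt ⟶ B) (h : α ≫ a = c.inl ≫ f)
    (h' : α' ≫ a' = c.inr ≫ f) :
    IsPullback c.inl α f a :=
  (((BinaryCofan.isVanKampen_iff _).mp (FinitaryExtensive.vanKampen _ hB)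
    c α α' f h h').mp ⟨hc⟩).1

end CategoryTheory.FinitaryExtensive

namespace CategoryTheory.Adjunction

variable {C D : Type*} [Category* C] [Category* D] {L : D ⥤ C} {R : C ⥤ D} (adj : L ⊣ R)

theorem commSq_map_pullback_counit {A B : C} (b : A ⟶ B) {X : D} (x : X ⟶ R.obj B)
    [HasPullback x (R.map b)] :
    CommSq (L.map (pullback.fst x (R.map b)))
      (L.map (pullback.snd x (R.map b)) ≫ adj.counit.app A) ((adj.homEquiv X B).symm x) b := by
  constructor
  rw [homEquiv_counit, ← L.map_comp_assoc, pullback.condition, L.map_comp_assoc,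
    Category.assoc, adj.counit_naturality]

theorem isPullback_map_pullback_counit [FinitaryExtensive C] [FinitaryExtensive D]
    [HasPullbacks D] [PreservesColimitsOfShape (Discrete WalkingPair) R] {A A' B : C}
    {a : A ⟶ B} {a' : A' ⟶ B} (hB : IsColimit (BinaryCofan.mk a a')) {X : D} (x : X ⟶ R.obj B) :
    IsPullback (L.map (pullback.fst x (R.map a)))
      (L.map (pullback.snd x (R.map a)) ≫ adj.counit.app A) ((adj.homEquiv X B).symm x) a := by
  have hRB : IsColimit (BinaryCofan.mk (R.map a) (R.map a')) :=
    mapIsColimitOfPreservesOfIsColimit R _ _ hB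
  have : PreservesColimitsOfShape (Discrete WalkingPair) L := adj.leftAdjoint_preservesColimits.1
  have hLX : IsColimit (BinaryCofan.mk (L.map (pullback.fst x (R.map a)))
      (L.map (pullback.fst x (R.map a')))) :=
    mapIsColimitOfPreservesOfIsColimit L _ _
      (FinitaryExtensive.isColimitBinaryCofanPullbackFst x hRB)
  exact FinitaryExtensive.isPullback_inl_of_isColimit hB hLX _ _ _
    (adj.commSq_map_pullback_counit a x).w.symm (adj.commSq_map_pullback_counit a' x).w.symm

end CategoryTheory.Adjunction

theorem isIso_thetaMap_of_isPullback {F E : Type*} [Category* F] [Category* E]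
    [HasPullbacks E] [HasPullbacks F] {fShriek : F ⥤ E} {fStar : E ⥤ F} (adj : fShriek ⊣ fStar)
    {A B : E} (a : A ⟶ B) {X : F} (x : X ⟶ fStar.obj B)
    (h : IsPullback (fShriek.map (pullback.fst x (fStar.map a)))
      (fShriek.map (pullback.snd x (fStar.map a)) ≫ adj.counit.app A)
      ((adj.homEquiv X B).symm x) a) :
    IsIso (thetaMap fShriek fStar adj a X x) := by
  have : thetaMap fShriek fStar adj a X x = h.isoPullback.hom := by
    ext
    · simpa [thetaMap] using pullback.lift_fst _ _ _
    · simpa [thetaMap] using pullback.lift_snd _ _ _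
  rw [this]
  infer_instance

universe v₁ v₂ u₁ u₂

theorem theta_isIso_of_coproduct_inclusion_general
    {E : Type u₁} [Category.{v₁} E] [HasFiniteLimits E]
    [FinitaryExtensive E]
    {F : Type u₂} [Category.{v₂} F] [HasFiniteLimits F]
    [FinitaryExtensive F]
    (fShriek : F ⥤ E) (fStar : E ⥤ F)
    [PreservesFiniteCoproducts fStar]
    (adj₁ : fShriek ⊣ fStar)
    {A A' B : E} (a : A ⟶ B) (a' : A' ⟶ B)
    (hB : Nonempty (IsColimit (BinaryCofan.mk a a')))
    (X : F) (x : X ⟶ fStar.obj B) :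
    IsIso (thetaMap fShriek fStar adj₁ a X x) :=
  isIso_thetaMap_of_isPullback adj₁ a x (adj₁.isPullback_map_pullback_counit hB.some x)

/-- Let `E` and `F` be finitary extensive categories with finite limits
(and finite coproducts), and let `f_! ⊣ f^* ⊣ f_*` be an adjoint triple with
`f^* : E ⥤ F` preserving finite limits and finite coproducts.  If `B` is the coproduct
of `A` and `A'`, with coprojection `a : A ⟶ B`, then for every object `X` of `F` and
every `x : X ⟶ f^* B`, the comparison map
`θ : f_!(X ×_{f^* B} f^* A) ⟶ f_!(X) ×_B A` is an isomorphism. -/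
theorem theta_isIso_of_coproduct_inclusion
    {E : Type u₁} [Category.{v₁} E] [HasFiniteLimits E] [HasFiniteCoproducts E]
    [FinitaryExtensive E]
    {F : Type u₂} [Category.{v₂} F] [HasFiniteLimits F] [HasFiniteCoproducts F]
    [FinitaryExtensive F]
    (fShriek : F ⥤ E) (fStar : E ⥤ F) (fPush : F ⥤ E)
    [PreservesFiniteLimits fStar] [PreservesFiniteCoproducts fStar]
    (adj₁ : fShriek ⊣ fStar) (adj₂ : fStar ⊣ fPush)
    {A A' B : E} (a : A ⟶ B) (a' : A' ⟶ B)
    (hB : Nonempty (IsColimit (BinaryCofan.mk a a')))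
    (X : F) (x : X ⟶ fStar.obj B) :
    IsIso (thetaMap fShriek fStar adj₁ a X x) :=
  theta_isIso_of_coproduct_inclusion_general fShriek fStar adj₁ a a' hB X x
end

section
/- (Pasting of Frobenius comparison maps along composable morphisms.) Let E and F be categories with pullbacks, and let f_! ⊣ f^* be an adjunction with f^* : E ⥤ F preserving pullbacks. Let u : A ⟶ B and v : B ⟶ C be morphisms of E. Suppose that for every object X of F and every morphism x : X ⟶ f^*(C) the comparison map θ_{X,v,x} is an isomorphism, and that for every object X' of F and every morphism x' : X' ⟶ f^*(B) the comparison map θ_{X',u,x'} is an isomorphism. Then for every object X of F and every morphism x : X ⟶ f^*(C), the comparison map θ_{X,u≫v,x} associated to the composite u ≫ v : A ⟶ C is an isomorphism. -/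
open CategoryTheory CategoryTheory.Limits

universe v₁ v₂ u₁ u₂

/-!
`θ_{X,a,x}` is invertible exactly when `f_!` carries a pullback square over `f^*a` to a pullback
square over `a` (with the counit on the right edge). The pullback along `f^*(u ≫ v)` is the
pasting of the pullbacks along `f^*v` and `f^*u`, so its image under `f_!` is the pasting of two
pullback squares in `E`, hence a pullback.
-/

section

variable {E F : Type*} [Category E] [Category F] [HasPullbacks E] [HasPullbacks F]
  (fShriek : F ⥤ E) (fStar : E ⥤ F) (adj : fShriek ⊣ fStar)

lemma isIso_thetaMap_iff_isPullback {A B : E} (a : A ⟶ B) (X : F) (x : X ⟶ fStar.obj B) :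
    IsIso (thetaMap fShriek fStar adj a X x) ↔
      IsPullback (fShriek.map (pullback.fst x (fStar.map a)))
        (fShriek.map (pullback.snd x (fStar.map a)) ≫ adj.counit.app A)
        ((adj.homEquiv X B).symm x) a := by
  have w₁ : thetaMap fShriek fStar adj a X x ≫ pullback.fst _ _ =
      fShriek.map (pullback.fst x (fStar.map a)) := pullback.lift_fst _ _ _
  have w₂ : thetaMap fShriek fStar adj a X x ≫ pullback.snd _ _ =
      fShriek.map (pullback.snd x (fStar.map a)) ≫ adj.counit.app A := pullback.lift_snd _ _ _
  constructor
  · intro _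
    refine IsPullback.of_iso_pullback ⟨?_⟩ (asIso (thetaMap fShriek fStar adj a X x)) w₁ w₂
    rw [← w₁, ← w₂, Category.assoc, Category.assoc, pullback.condition]
  · intro h
    have : thetaMap fShriek fStar adj a X x = h.isoPullback.hom := by
      apply pullback.hom_ext <;> simp [w₁, w₂]
    rw [this]
    infer_instance

lemma isIso_thetaMap_iff_of_isPullback {A B : E} {a : A ⟶ B} {X P : F} {x : X ⟶ fStar.obj B}
    {p : P ⟶ X} {q : P ⟶ fStar.obj A} (h : IsPullback p q x (fStar.map a)) :
    IsIso (thetaMap fShriek fStar adj a X x) ↔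
      IsPullback (fShriek.map p) (fShriek.map q ≫ adj.counit.app A)
        ((adj.homEquiv X B).symm x) a := by
  rw [isIso_thetaMap_iff_isPullback]
  let e := fShriek.mapIso h.isoPullback
  exact ⟨fun s => s.of_iso e.symm (Iso.refl _) (Iso.refl _) (Iso.refl _)
      (by simp [e, ← Functor.map_comp]) (by simp [e, ← Functor.map_comp_assoc]) (by simp) (by simp),
    fun s => s.of_iso e (Iso.refl _) (Iso.refl _) (Iso.refl _)
      (by simp [e, ← Functor.map_comp]) (by simp [e, ← Functor.map_comp_assoc]) (by simp) (by simp)⟩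

end

theorem theta_isIso_comp_general
    {E : Type u₁} [Category.{v₁} E] [HasPullbacks E]
    {F : Type u₂} [Category.{v₂} F] [HasPullbacks F]
    (fShriek : F ⥤ E) (fStar : E ⥤ F)
    (adj : fShriek ⊣ fStar)
    {A B C : E} (u : A ⟶ B) (v : B ⟶ C)
    (hv : ∀ (X : F) (x : X ⟶ fStar.obj C), IsIso (thetaMap fShriek fStar adj v X x))
    (hu : ∀ (X' : F) (x' : X' ⟶ fStar.obj B), IsIso (thetaMap fShriek fStar adj u X' x'))
    (X : F) (x : X ⟶ fStar.obj C) :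
    IsIso (thetaMap fShriek fStar adj (u ≫ v) X x) := by
  set p := pullback.snd x (fStar.map v)
  have hF : IsPullback (pullback.fst p (fStar.map u) ≫ pullback.fst x (fStar.map v))
      (pullback.snd p (fStar.map u)) x (fStar.map (u ≫ v)) := by
    rw [Functor.map_comp]
    exact (IsPullback.of_hasPullback _ _).paste_horiz (IsPullback.of_hasPullback _ _)
  have hE_u := (isIso_thetaMap_iff_isPullback fShriek fStar adj u _ p).mp (hu _ p)
  have hE_v := (isIso_thetaMap_iff_isPullback fShriek fStar adj v X x).mp (hv X x)
  rw [Adjunction.homEquiv_counit] at hE_u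
  rw [isIso_thetaMap_iff_of_isPullback fShriek fStar adj hF, Functor.map_comp]
  exact hE_u.paste_horiz hE_v

/-- Pasting of Frobenius comparison maps along composable morphisms.
Let `E` and `F` have pullbacks and let `f_! ⊣ f^*` be an adjunction with `f^* : E ⥤ F`
preserving pullbacks.  If all comparison maps `θ` for `v : B ⟶ C` are isomorphisms, and
all comparison maps `θ` for `u : A ⟶ B` are isomorphisms, then all comparison maps `θ`
for the composite `u ≫ v : A ⟶ C` are isomorphisms. -/
theorem theta_isIso_comp
    {E : Type u₁} [Category.{v₁} E] [HasPullbacks E]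
    {F : Type u₂} [Category.{v₂} F] [HasPullbacks F]
    (fShriek : F ⥤ E) (fStar : E ⥤ F)
    [PreservesLimitsOfShape WalkingCospan fStar]
    (adj : fShriek ⊣ fStar)
    {A B C : E} (u : A ⟶ B) (v : B ⟶ C)
    (hv : ∀ (X : F) (x : X ⟶ fStar.obj C), IsIso (thetaMap fShriek fStar adj v X x))
    (hu : ∀ (X' : F) (x' : X' ⟶ fStar.obj B), IsIso (thetaMap fShriek fStar adj u X' x'))
    (X : F) (x : X ⟶ fStar.obj C) :
    IsIso (thetaMap fShriek fStar adj (u ≫ v) X x) :=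
  theta_isIso_comp_general fShriek fStar adj u v hv hu X x
end

section
/- Let X be a topological space. Then X is Jacobson if and only if the stalk functors at closed points are jointly conservative on set-valued sheaves: for every morphism φ : F ⟶ G in Sh(X), if for every point x ∈ X with {x} closed the induced map on stalks φ_x : F_x ⟶ G_x is an isomorphism, then φ is an isomorphism. -/
/-!
Call `T ⊆ X` very dense if every nonempty locally closed set meets `T`; equivalently, an open set
`U` is contained in every open set that contains `U ∩ T`. Jacobson spaces are exactly those whose
closed points are very dense, so it suffices to show that `T` is very dense if and only if the
stalk functors at the points of `T` jointly reflect isomorphisms of sheaves of sets.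

If `T` is very dense and `φ` is bijective on stalks at `T`, then the locus where two sections have
the same germ, and the locus where a section of `G` lifts locally along `φ`, are open sets
containing every point of `T` in the domain, hence everything; so `φ` is bijective on sections.
Conversely, given opens `V ⊆ U` with `U ∩ T ⊆ V`, the stalks of the representable sheaves of
`V` and `U` are subsingletons, nonempty exactly over `V` and `U`, so the inclusion of
representables is bijective on stalks at `T`; it is therefore an isomorphism, and `U ⊆ V` by
Yoneda.
-/

open CategoryTheory CategoryTheory.Limits

universe u

open TopologicalSpace Opposite TopCat.Presheaf

section VeryDense

variable {X : Type*} [TopologicalSpace X]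

/-- The *très dense* subsets of EGA IV, 10.1.3. -/
def IsVeryDense (T : Set X) : Prop :=
  ∀ Z : Set X, Z.Nonempty → IsLocallyClosed Z → (Z ∩ T).Nonempty

theorem isVeryDense_iff_subset_of_inter_subset {T : Set X} :
    IsVeryDense T ↔ ∀ U V : Set X, IsOpen U → IsOpen V → U ∩ T ⊆ V → U ⊆ V := by
  constructor
  · intro hT U V hU hV hUV
    by_contra hUV'
    obtain ⟨x, ⟨hxU, hxV⟩, hxT⟩ := hT (U \ V) (Set.sdiff_nonempty.2 hUV')
      (hU.isLocallyClosed.inter hV.isClosed_compl.isLocallyClosed)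
    exact hxV (hUV ⟨hxU, hxT⟩)
  · rintro h Z ⟨x, hx⟩ ⟨U, C, hU, hC, rfl⟩
    by_contra hZT
    exact h U Cᶜ hU hC.isOpen_compl (fun y hy hyC => hZT ⟨y, ⟨hy.1, hyC⟩, hy.2⟩) hx.1 hx.2

theorem jacobsonSpace_iff_isVeryDense_closedPoints :
    JacobsonSpace X ↔ IsVeryDense (closedPoints X) :=
  jacobsonSpace_iff_locallyClosed

end VeryDense

namespace TopCat.Presheaf

section Concrete

variable {C : Type*} [Category.{u} C] [HasColimits C] {FC : C → C → Type*} {CC : C → Type u}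
  [∀ X Y, FunLike (FC X Y) (CC X) (CC Y)] [ConcreteCategory.{u} C FC]
  [PreservesFilteredColimits (forget C)] {X : TopCat.{u}}

theorem isOpen_setOf_germ_eq (F : X.Presheaf C) {U : Opens X} (s t : ToType (F.obj (op U))) :
    IsOpen {x | ∃ hx : x ∈ U, F.germ U x hx s = F.germ U x hx t} := by
  refine isOpen_iff_forall_mem_open.2 fun x ⟨hx, hst⟩ => ?_
  obtain ⟨W, hxW, iU, iU', hW⟩ := F.germ_eq x hx hx s t hst
  exact ⟨W, fun y hy => ⟨iU.le hy, germ_ext F W hy iU iU' hW⟩, W.isOpen, hxW⟩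

end Concrete

variable {X : TopCat.{u}}

instance subcanonical_opens_grothendieckTopology : (Opens.grothendieckTopology X).Subcanonical :=
  .of_isSheaf_yoneda_obj _ fun U => by
    rw [← isSheaf_iff_isSheaf_of_type, ← TopCat.Presheaf.IsSheaf,
      TopCat.Presheaf.isSheaf_iff_isSheafUniqueGluing_types]
    intro ι V sf _
    exact ⟨homOfLE (iSup_le fun i => (sf i).le), fun _ => rfl, fun _ _ => rfl⟩

theorem subsingleton_stalk_yoneda_obj (U : Opens X) (x : X) :
    Subsingleton ((stalkFunctor (Type u) x).obj (yoneda.obj U)) := by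
  refine ⟨fun a b => ?_⟩
  obtain ⟨W₁, hx₁, s₁, rfl⟩ := exists_germ_eq (yoneda.obj U) (x := x) a
  obtain ⟨W₂, hx₂, s₂, rfl⟩ := exists_germ_eq (yoneda.obj U) (x := x) b
  exact germ_ext _ (W₁ ⊓ W₂) ⟨hx₁, hx₂⟩ (homOfLE inf_le_left) (homOfLE inf_le_right)
    rfl

theorem nonempty_stalk_yoneda_obj_iff (U : Opens X) (x : X) :
    Nonempty ((stalkFunctor (Type u) x).obj (yoneda.obj U)) ↔ x ∈ U := by
  refine ⟨fun ⟨a⟩ => ?_, fun hx => ⟨germ (yoneda.obj U) U x hx (𝟙 U)⟩⟩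
  obtain ⟨W, hxW, s, -⟩ := exists_germ_eq (yoneda.obj U) (x := x) a
  exact s.le hxW

theorem bijective_stalkFunctor_map_yoneda_map {V U : Opens X} (i : V ⟶ U) {x : X}
    (hx : x ∈ U → x ∈ V) :
    Function.Bijective ((stalkFunctor (Type u) x).map (yoneda.map i)) := by
  have := subsingleton_stalk_yoneda_obj V x
  have := subsingleton_stalk_yoneda_obj U x
  refine ⟨fun a b _ => Subsingleton.elim a b, fun b => ?_⟩
  obtain ⟨a⟩ := (nonempty_stalk_yoneda_obj_iff V x).2 <|
    hx <| (nonempty_stalk_yoneda_obj_iff U x).1 ⟨b⟩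
  exact ⟨a, Subsingleton.elim _ _⟩

end TopCat.Presheaf

section Sheaf

variable {X : TopCat.{u}} {T : Set X}

theorem IsVeryDense.app_injective_of_stalkFunctor_map_injective (hT : IsVeryDense T)
    {F : TopCat.Sheaf (Type u) X} {G : X.Presheaf (Type u)} (f : F.presheaf ⟶ G)
    (hf : ∀ x ∈ T, Function.Injective ((stalkFunctor (Type u) x).map f)) (U : Opens X) :
    Function.Injective (f.app (op U)) := by
  intro s t hst
  have hU := isVeryDense_iff_subset_of_inter_subset.1 hT _ _ U.isOpen
    (isOpen_setOf_germ_eq F.presheaf s t) fun x ⟨hxU, hxT⟩ => ⟨hxU, hf x hxT <| by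
      rw [stalkFunctor_map_germ_apply, stalkFunctor_map_germ_apply, hst]⟩
  exact section_ext F U s t fun x hx => (hU hx).2

theorem IsVeryDense.app_surjective_of_stalkFunctor_map_bijective (hT : IsVeryDense T)
    {F G : TopCat.Sheaf (Type u) X} (f : F ⟶ G)
    (hf : ∀ x ∈ T, Function.Bijective ((stalkFunctor (Type u) x).map f.hom)) (U : Opens X) :
    Function.Surjective (f.hom.app (op U)) := by
  have hinj x := stalkFunctor_map_injective_of_app_injective
    (hT.app_injective_of_stalkFunctor_map_injective f.hom fun x hx => (hf x hx).1) x
  refine app_surjective_of_injective_of_locally_surjective f U (fun x _ => hinj x) fun t => ?_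
  have hopen : IsOpen {x | ∃ (V : Opens X) (_ : x ∈ V) (iVU : V ⟶ U)
      (s : F.presheaf.obj (op V)), f.hom.app (op V) s = G.presheaf.map iVU.op t} :=
    isOpen_iff_forall_mem_open.2 fun x ⟨V, hxV, i, s, e⟩ =>
      ⟨V, fun y hy => ⟨V, hy, i, s, e⟩, V.isOpen, hxV⟩
  refine isVeryDense_iff_subset_of_inter_subset.1 hT _ _ U.isOpen hopen fun x ⟨hxU, hxT⟩ => ?_
  obtain ⟨s₀, hs₀⟩ := (hf x hxT).2 (G.presheaf.germ U x hxU t)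
  obtain ⟨V, hxV, s, rfl⟩ := F.presheaf.exists_germ_eq s₀
  rw [stalkFunctor_map_germ_apply] at hs₀
  obtain ⟨W, hxW, iWV, iWU, hW⟩ := G.presheaf.germ_eq x hxV hxU _ _ hs₀
  exact ⟨W, hxW, iWU, F.presheaf.map iWV.op s, by rw [NatTrans.naturality_apply, hW]⟩

theorem IsVeryDense.isIso_of_stalkFunctor_map_iso (hT : IsVeryDense T)
    {F G : TopCat.Sheaf (Type u) X} (f : F ⟶ G)
    (hf : ∀ x ∈ T, IsIso ((stalkFunctor (Type u) x).map f.hom)) : IsIso f := by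
  have hbij x hx := (isIso_iff_bijective _).1 (hf x hx)
  have (U : (Opens X)ᵒᵖ) : IsIso (((TopCat.Sheaf.forget (Type u) X).map f).app U) :=
    (isIso_iff_bijective _).2
      ⟨hT.app_injective_of_stalkFunctor_map_injective f.hom (fun x hx => (hbij x hx).1) U.unop,
        hT.app_surjective_of_stalkFunctor_map_bijective f hbij U.unop⟩
  have : IsIso ((TopCat.Sheaf.forget (Type u) X).map f) := NatIso.isIso_of_isIso_app _
  exact isIso_of_fully_faithful (TopCat.Sheaf.forget (Type u) X) f

theorem isVeryDense_of_forall_isIso_of_stalkFunctor_map_iso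
    (h : ∀ (F G : TopCat.Sheaf (Type u) X) (f : F ⟶ G),
      (∀ x ∈ T, IsIso ((stalkFunctor (Type u) x).map f.hom)) → IsIso f) :
    IsVeryDense T := by
  refine isVeryDense_iff_subset_of_inter_subset.2 fun U V hU hV hUV => ?_
  let i : (⟨U ∩ V, hU.inter hV⟩ : Opens X) ⟶ ⟨U, hU⟩ := homOfLE Set.inter_subset_left
  have : IsIso ((Opens.grothendieckTopology X).yoneda.map i) :=
    h _ _ _ fun x hx => (isIso_iff_bijective _).2 <|
      bijective_stalkFunctor_map_yoneda_map i fun hxU => ⟨hxU, hUV ⟨hxU, hx⟩⟩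
  have := isIso_of_fully_faithful (Opens.grothendieckTopology X).yoneda i
  exact fun x hx => ((inv i).le hx).2

end Sheaf

/-- A topological space `X` is Jacobson if and only if the stalk
functors at the closed points of `X` are jointly conservative on set-valued sheaves:
a morphism `φ : F ⟶ G` of sheaves on `X` is an isomorphism as soon as the induced map
on stalks `φ_x : F_x ⟶ G_x` is an isomorphism for every point `x` with `{x}` closed. -/
theorem jacobsonSpace_iff_stalks_at_closed_points_jointly_conservative (X : TopCat.{u}) :
    JacobsonSpace X ↔
      ∀ (F G : TopCat.Sheaf (Type u) X) (φ : F ⟶ G),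
        (∀ x : X, IsClosed ({x} : Set X) →
          IsIso ((TopCat.Presheaf.stalkFunctor (Type u) x).map φ.hom)) →
        IsIso φ := by
  rw [jacobsonSpace_iff_isVeryDense_closedPoints]
  exact ⟨fun hT _ _ => hT.isIso_of_stalkFunctor_map_iso,
    isVeryDense_of_forall_isIso_of_stalkFunctor_map_iso⟩
end

section
/- Let E be an elementary topos with all small colimits such that: colimits in E are stable under pullback, every object of E is a colimit of a small diagram of subterminal objects, and every subterminal object of E is complemented (i.e. for every subterminal A there is a subterminal A' with 1 ≅ A ⨿ A'). Let F be an elementary topos with small colimits, and let f_! ⊣ f^* ⊣ f_* be an adjoint triple with f^* : E ⥤ F preserving finite limits and small colimits. Then f^* is cartesian closed; equivalently, for every object X of F and every object A of E, the Frobenius map f_!(X ⨯ f^*(A)) ⟶ f_!(X) ⨯ A — whose first component is f_! applied to the first projection and whose second component is f_! applied to the second projection followed by the counit f_!(f^*(A)) ⟶ A — is an isomorphism. -/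
open CategoryTheory CategoryTheory.Limits

universe v u₁ u₂

/-!
Write `β A : f_!(X ⨯ f^* A) ⟶ f_! X ⨯ A` for the Frobenius map at a fixed `X`. It is natural in
`A`, both sides preserve colimits in `A`, and `β 1` is invertible. Since every object is a colimit
of subterminals, it suffices to invert `β A` for a subterminal `A` with complement `A'`. Via `β 1`,
`f_!(X ⨯ f^* A) ⊔ f_!(X ⨯ f^* A')` is a coproduct decomposition of `f_! X ⨯ 1`; pulling it back
along the mono `f_! X ⨯ A ↪ f_! X ⨯ 1` identifies `f_!(X ⨯ f^* A)` with `f_! X ⨯ A`, because the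
other summand pulls back to an object mapping to both `A` and `A'`, which is initial since
complementary subterminals of a topos are disjoint. Invertibility of all Frobenius maps is
equivalent to `f^*` being cartesian closed.
-/

open MonoidalCategory CartesianMonoidalCategory

namespace CategoryTheory.CartesianMonoidalCategory

variable {C : Type u₁} [Category.{v} C] [CartesianMonoidalCategory C]

instance mono_whiskerLeft (Y : C) {A B : C} (f : A ⟶ B) [Mono f] : Mono (Y ◁ f) :=
  ⟨fun g h e => by
    ext
    · simpa using e =≫ fst _ _
    · simpa using (cancel_mono f).mp (by simpa using e =≫ snd _ _)⟩

theorem isIso_fst_of_isTerminal (X : C) {T : C} (hT : IsTerminal T) : IsIso (fst X T) := by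
  have : IsIso (toUnit T) := isIso_of_isTerminal hT isTerminalTensorUnit _
  rw [← whiskerLeft_toUnit_comp_rightUnitor_hom]
  infer_instance

@[simps]
noncomputable def prodIsoTensor (X Y : C) : X ⨯ Y ≅ X ⊗ Y where
  hom := lift prod.fst prod.snd
  inv := prod.lift (fst X Y) (snd X Y)
  hom_inv_id := by ext <;> simp
  inv_hom_id := by ext <;> simp [prod.lift_fst, prod.lift_snd]

end CategoryTheory.CartesianMonoidalCategory

section Frobenius

attribute [local instance] BraidedCategory.ofCartesianMonoidalCategory

variable {C : Type u₁} [Category.{v} C] [CartesianMonoidalCategory C]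
  {D : Type u₂} [Category.{v} D] [CartesianMonoidalCategory D] {L : D ⥤ C} {R : C ⥤ D}
  (adj : L ⊣ R)

@[simps]
noncomputable def frobeniusNatTrans (X : D) : R ⋙ tensorLeft X ⋙ L ⟶ tensorLeft (L.obj X) where
  app A := prodComparison L X (R.obj A) ≫ L.obj X ◁ adj.counit.app A
  naturality A B f := by
    simp [prodComparison_natural_whiskerLeft_assoc, ← whiskerLeft_comp]

instance isIso_frobeniusNatTrans_app_terminal [HasTerminal C] (X : D) :
    IsIso ((frobeniusNatTrans adj X).app (⊤_ C)) := by
  have : PreservesLimitsOfSize.{0, 0} R := adj.rightAdjoint_preservesLimits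
  have := isIso_fst_of_isTerminal X (IsTerminal.isTerminalObj R _ terminalIsTerminal)
  have := isIso_fst_of_isTerminal (L.obj X) terminalIsTerminal
  have : IsIso ((frobeniusNatTrans adj X).app (⊤_ C) ≫ fst _ _) := by
    simp only [frobeniusNatTrans_app, Category.assoc, whiskerLeft_fst,
      CartesianMonoidalCategory.prodComparison_fst]
    infer_instance
  exact IsIso.of_isIso_comp_right _ (fst _ _)

theorem prod_lift_eq_frobeniusNatTrans_app (X : D) (A : C) :
    prod.lift (L.map prod.fst) (L.map prod.snd ≫ adj.counit.app A) =
      L.map (prodIsoTensor X (R.obj A)).hom ≫ (frobeniusNatTrans adj X).app A ≫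
        (prodIsoTensor (L.obj X) A).inv := by
  ext <;> simp [prod.lift_fst, prod.lift_snd, ← Functor.map_comp, ← Functor.map_comp_assoc]

theorem frobeniusMorphism_app_eq_frobeniusNatTrans_app (A : C) (X : D) :
    (frobeniusMorphism R adj A).natTrans.app X =
      L.map (β_ (R.obj A) X).hom ≫ (frobeniusNatTrans adj X).app A ≫ (β_ (L.obj X) A).hom := by
  refine CartesianMonoidalCategory.hom_ext _ _ ?_ ?_ <;>
    simp [frobeniusMorphism, ← Functor.map_comp, ← Functor.map_comp_assoc]

theorem monoidalClosedFunctor_of_isIso_frobeniusNatTrans_app [MonoidalClosed C] [MonoidalClosed D]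
    [PreservesLimitsOfShape (Discrete WalkingPair) R]
    (h : ∀ X A, IsIso ((frobeniusNatTrans adj X).app A)) : MonoidalClosedFunctor R where
  comparison_iso A := by
    have (X : D) : IsIso ((frobeniusMorphism R adj A).natTrans.app X) := by
      rw [frobeniusMorphism_app_eq_frobeniusNatTrans_app]
      infer_instance
    have : IsIso (frobeniusMorphism R adj A).natTrans := NatIso.isIso_of_isIso_app _
    exact expComparison_iso_of_frobeniusMorphism_iso R adj A

end Frobenius

theorem Classifier.nonempty_isInitial_of_isColimit_binaryCofan {C : Type u₁} [Category.{v} C]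
    [CartesianMonoidalCategory C] [MonoidalClosed C] [HasInitial C] (cls : _root_.Classifier C)
    {A A' : C} (hc : IsColimit (BinaryCofan.mk (terminal.from A) (terminal.from A')))
    {P : C} (p : P ⟶ A) (p' : P ⟶ A') : Nonempty (IsInitial P) := by
  let fls : ⊤_ C ⟶ cls.Ω := cls.χ (initial.to (⊤_ C))
  obtain ⟨σ, hσA, hσA'⟩ : { σ : ⊤_ C ⟶ cls.Ω //
      terminal.from A ≫ σ = terminal.from A ≫ cls.truth ∧
      terminal.from A' ≫ σ = terminal.from A' ≫ fls } :=
    BinaryCofan.IsColimit.desc' hc _ _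
  have hP : terminal.from P ≫ fls = terminal.from P ≫ cls.truth := by
    calc terminal.from P ≫ fls = p' ≫ terminal.from A' ≫ σ := by simp [hσA']
      _ = p ≫ terminal.from A ≫ σ := by simp only [← Category.assoc, terminal.comp_from]
      _ = terminal.from P ≫ cls.truth := by simp [hσA]
  -- `P` maps to the pullback of `truth` along `false`, which is `⊥`; initial objects are strict.
  let ℓ : P ⟶ ⊥_ C := (cls.isPullback _).lift _ _ hP
  exact ⟨IsInitial.ofIso initialIsInitial (asIso ℓ).symm⟩

namespace CategoryTheory.Limits

variable {C : Type u₁} [Category.{v} C] [HasPullbacks C] [HasBinaryCoproducts C]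

noncomputable def BinaryCofan.isColimitPullbackSnd {W W' T V : C} {u : W ⟶ T} {u' : W' ⟶ T}
    (hc : IsColimit (BinaryCofan.mk u u')) (m : V ⟶ T)
    [PreservesColimitsOfShape (Discrete WalkingPair) (Over.pullback m)] :
    IsColimit (BinaryCofan.mk (pullback.snd u m) (pullback.snd u' m)) := by
  let i : Over.mk u ⟶ Over.mk (𝟙 T) := Over.homMk u
  let i' : Over.mk u' ⟶ Over.mk (𝟙 T) := Over.homMk u'
  have hOver : IsColimit (BinaryCofan.mk i i') :=
    isColimitOfReflectsOfMapIsColimit (Over.forget T) i i' hc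
  have hV := mapIsColimitOfPreservesOfIsColimit (Over.forget V) _ _
    (isColimitMapCoconeBinaryCofanEquiv (Over.pullback m) i i'
      (isColimitOfPreserves (Over.pullback m) hOver))
  refine IsColimit.ofIsoColimit hV (Cocone.ext (@asIso _ _ _ _ (pullback.snd (𝟙 T) m)
    (pullback_snd_iso_of_left_iso (𝟙 T) m)) ?_)
  rintro ⟨⟨⟩⟩ <;> exact pullback.lift_snd _ _ _

theorem isIso_of_isColimit_binaryCofan_of_isInitial_pullback {W W' T Z : C}
    {u : W ⟶ T} {u' : W' ⟶ T} (hc : IsColimit (BinaryCofan.mk u u')) {m : Z ⟶ T} [Mono m]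
    [PreservesColimitsOfShape (Discrete WalkingPair) (Over.pullback m)]
    {φ : W ⟶ Z} (hφ : φ ≫ m = u) (h : IsInitial (pullback u' m)) : IsIso φ := by
  have hW : IsPullback (𝟙 W) φ u m := .of_horiz_isIso_mono ⟨by simp [hφ]⟩
  have : IsIso (pullback.snd u m) :=
    (BinaryCofan.isColimit_iff_isIso_inl h _).mp ⟨BinaryCofan.isColimitPullbackSnd hc m⟩
  rw [← hW.isoPullback_hom_snd]
  infer_instance

end CategoryTheory.Limits

section SubterminallyGenerated

variable {E : Type u₁} [Category.{v} E] [CartesianMonoidalCategory E] [MonoidalClosed E]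
  [HasPullbacks E] [HasInitial E] [HasBinaryCoproducts E]
  {G : E ⥤ E} {Y : E} (ψ : G ⟶ tensorLeft Y) [IsIso (ψ.app (⊤_ E))]

theorem isIso_app_of_isColimit_binaryCofan_terminal (cls : _root_.Classifier E)
    (hUniv : ∀ {A B : E} (g : A ⟶ B),
      PreservesColimitsOfShape (Discrete WalkingPair) (Over.pullback g))
    {A A' : E} [Mono (terminal.from A)]
    (hc : IsColimit (BinaryCofan.mk (terminal.from A) (terminal.from A')))
    [PreservesColimit (pair A A') G] : IsIso (ψ.app A) := by
  let m : Y ⊗ A ⟶ G.obj (⊤_ E) := Y ◁ terminal.from A ≫ inv (ψ.app (⊤_ E))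
  have := hUniv m
  refine isIso_of_isColimit_binaryCofan_of_isInitial_pullback
    (mapIsColimitOfPreservesOfIsColimit G _ _ hc) (m := m) ?_ ?_
  · rw [← Category.assoc, IsIso.comp_inv_eq]
    exact (ψ.naturality _).symm
  · exact Nonempty.some <| cls.nonempty_isInitial_of_isColimit_binaryCofan hc
      (pullback.snd _ m ≫ snd Y A) (pullback.fst _ m ≫ ψ.app A' ≫ snd Y A')

theorem isIso_app_of_subterminallyGenerated (cls : _root_.Classifier E)
    (hUniv : ∀ {A B : E} (g : A ⟶ B),
      PreservesColimitsOfShape (Discrete WalkingPair) (Over.pullback g))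
    (hGen : ∀ A : E, ∃ (J : Type v) (_ : SmallCategory J) (K : J ⥤ E) (c : Cocone K),
      (∀ j : J, Mono (terminal.from (K.obj j))) ∧ c.pt = A ∧ Nonempty (IsColimit c))
    (hCompl : ∀ A : E, Mono (terminal.from A) →
      ∃ A' : E, Mono (terminal.from A') ∧
        Nonempty (IsColimit (BinaryCofan.mk (terminal.from A) (terminal.from A'))))
    [PreservesColimits G] (A : E) : IsIso (ψ.app A) := by
  obtain ⟨J, _, K, c, hK, rfl, ⟨hc⟩⟩ := hGen A
  have (j : J) : IsIso ((Functor.whiskerLeft K ψ).app j) := by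
    have := hK j
    obtain ⟨A', -, ⟨hA'⟩⟩ := hCompl _ (hK j)
    exact isIso_app_of_isColimit_binaryCofan_terminal ψ cls hUniv hA'
  have : IsIso (Functor.whiskerLeft K ψ) := NatIso.isIso_of_isIso_app _
  exact isIso_app_coconePt_of_preservesColimit K ψ c hc

end SubterminallyGenerated

theorem cartesianClosed_inverse_image_of_subterminally_generated_general
    (E : Type u₁) [Category.{v} E] [HasFiniteLimits E] [HasFiniteColimits E]
    [CartesianMonoidalCategory E] [MonoidalClosed E] [_root_.HasClassifier E]
    (hUniv : ∀ {A B : E} (g : A ⟶ B), PreservesColimits (Over.pullback g))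
    (hGen : ∀ A : E, ∃ (J : Type v) (_ : SmallCategory J) (K : J ⥤ E) (c : Cocone K),
      (∀ j : J, Mono (terminal.from (K.obj j))) ∧ c.pt = A ∧ Nonempty (IsColimit c))
    (hCompl : ∀ A : E, Mono (terminal.from A) →
      ∃ A' : E, Mono (terminal.from A') ∧
        Nonempty (IsColimit (BinaryCofan.mk (terminal.from A) (terminal.from A'))))
    (F : Type u₂) [Category.{v} F]
    [CartesianMonoidalCategory F] [MonoidalClosed F]
    (fShriek : F ⥤ E) (fStar : E ⥤ F)
    [PreservesFiniteLimits fStar] [PreservesColimits fStar]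
    (adj₁ : fShriek ⊣ fStar) :
    MonoidalClosedFunctor fStar ∧
      ∀ (X : F) (A : E),
        IsIso (prod.lift (fShriek.map prod.fst)
          (fShriek.map prod.snd ≫ adj₁.counit.app A) :
            fShriek.obj (X ⨯ fStar.obj A) ⟶ fShriek.obj X ⨯ A) := by
  obtain ⟨cls⟩ := HasClassifier.nonempty (C := E)
  have := adj₁.leftAdjoint_preservesColimits
  have hFrobenius (X : F) (A : E) : IsIso ((frobeniusNatTrans adj₁ X).app A) :=
    isIso_app_of_subterminallyGenerated (frobeniusNatTrans adj₁ X) cls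
      (fun g => have := hUniv g; inferInstance) hGen hCompl A
  refine ⟨monoidalClosedFunctor_of_isIso_frobeniusNatTrans_app adj₁ hFrobenius, fun X A => ?_⟩
  rw [prod_lift_eq_frobeniusNatTrans_app adj₁]
  infer_instance

/-- Let `E` be an elementary topos with all small colimits such that
colimits in `E` are stable under pullback (the base-change functors preserve colimits),
every object of `E` is the colimit of a small diagram of subterminal objects, and every
subterminal object of `E` is complemented.  Let `F` be an elementary topos with small
colimits and `f_! ⊣ f^* ⊣ f_*` an adjoint triple, with `f^* : E ⥤ F` preserving finite
limits and small colimits.  Then `f^*` is cartesian closed; equivalently, all Frobenius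
maps `f_!(X ⨯ f^* A) ⟶ f_!(X) ⨯ A` are isomorphisms. -/
theorem cartesianClosed_inverse_image_of_subterminally_generated
    (E : Type u₁) [Category.{v} E] [HasFiniteLimits E] [HasFiniteColimits E]
    [CartesianMonoidalCategory E] [MonoidalClosed E] [_root_.HasClassifier E] [HasColimits E]
    (hUniv : ∀ {A B : E} (g : A ⟶ B), PreservesColimits (Over.pullback g))
    (hGen : ∀ A : E, ∃ (J : Type v) (_ : SmallCategory J) (K : J ⥤ E) (c : Cocone K),
      (∀ j : J, Mono (terminal.from (K.obj j))) ∧ c.pt = A ∧ Nonempty (IsColimit c))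
    (hCompl : ∀ A : E, Mono (terminal.from A) →
      ∃ A' : E, Mono (terminal.from A') ∧
        Nonempty (IsColimit (BinaryCofan.mk (terminal.from A) (terminal.from A'))))
    (F : Type u₂) [Category.{v} F] [HasFiniteLimits F] [HasFiniteColimits F]
    [CartesianMonoidalCategory F] [MonoidalClosed F] [_root_.HasClassifier F] [HasColimits F]
    (fShriek : F ⥤ E) (fStar : E ⥤ F) (fPush : F ⥤ E)
    [PreservesFiniteLimits fStar] [PreservesColimits fStar]
    (adj₁ : fShriek ⊣ fStar) (adj₂ : fStar ⊣ fPush) :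
    MonoidalClosedFunctor fStar ∧
      ∀ (X : F) (A : E),
        IsIso (prod.lift (fShriek.map prod.fst)
          (fShriek.map prod.snd ≫ adj₁.counit.app A) :
            fShriek.obj (X ⨯ fStar.obj A) ⟶ fShriek.obj X ⨯ A) :=
  cartesianClosed_inverse_image_of_subterminally_generated_general E hUniv hGen hCompl F fShriek
    fStar adj₁
end
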